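/- Let Ψ_{a_1...a_s} be a symmetric rank-s tensor-spinor with gauge transformation δ_G Ψ_{a_1...a_s} = Σ_i ∂_{a_i} κ_{U_i} and gamma-traceless gauge parameters. Suppose a linear combination ℰ = c_0 γ^b ∂_b Ψ_{a_1...a_s} − Σ_{i=1}^s c_i γ^b ∂_{a_i} Ψ_{b U_i} is gauge-invariant for all choices of gauge parameter. Then c_0 = c_1 = ... = c_s, i.e., ℰ is proportional to the spin-(s+1/2) equation of motion. -/
import Mathlib


/-- Remove the `i`-th entry from an `s`-tuple of indices. -/
def removeIdx {s D : ℕ} (i : Fin s) (v : Fin s → Fin D) (j : Fin (s - 1)) : Fin D :=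
  if _h : (j : ℕ) < (i : ℕ) then
    v ⟨(j : ℕ), by have hj := j.isLt; omega⟩
  else
    v ⟨(j : ℕ) + 1, by have hj := j.isLt; omega⟩

/-- Partial derivative `∂_a` acting on a spinor-valued polynomial field. -/
noncomputable def pdAct {D N : ℕ} (a : Fin D) (ψ : Fin N → MvPolynomial (Fin D) ℂ) :
    Fin N → MvPolynomial (Fin D) ℂ :=
  fun i => MvPolynomial.pderiv a (ψ i)

/-- Action of a (gamma) matrix on the spinor index of a field. -/
noncomputable def matAct {D N : ℕ} (A : Matrix (Fin N) (Fin N) ℂ) (ψ : Fin N → MvPolynomial (Fin D) ℂ) :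
    Fin N → MvPolynomial (Fin D) ℂ :=
  fun i => ∑ k, A i k • ψ k

/-- The gauge variation `δΨ_{a₁…a_s} = Σ_i ∂_{a_i} κ_{U_i}` of a rank-`s` fermion. -/
noncomputable def gaugeVar {D s N : ℕ} (kap : (Fin (s - 1) → Fin D) → Fin N → MvPolynomial (Fin D) ℂ)
    (v : Fin s → Fin D) : Fin N → MvPolynomial (Fin D) ℂ :=
  ∑ i, pdAct (v i) (kap (removeIdx i v))

open MvPolynomial in
lemma aux_pderiv_sq {D : ℕ} (a0 b : Fin D) :
    MvPolynomial.pderiv b ((X a0 : MvPolynomial (Fin D) ℂ) ^ 2)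
      = if b = a0 then X a0 + X a0 else 0 := by
  rw [pow_two, pderiv_mul]
  by_cases h : b = a0
  · subst h; simp [pderiv_X_self]
  · simp [pderiv_X_of_ne (Ne.symm h), h]

lemma aux_removeIdx_update {s D : ℕ} (i : Fin s) (v : Fin s → Fin D) (b : Fin D) :
    removeIdx i (Function.update v i b) = removeIdx i v := by
  funext j
  unfold removeIdx
  split_ifs with h
  · rw [Function.update_of_ne (Fin.ne_of_val_ne (by simp; omega))]
  · rw [Function.update_of_ne (Fin.ne_of_val_ne (by simp; omega))]

open MvPolynomial

/-- if the linear combination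
`ℰ = c₀ γ^b ∂_b Ψ_{a₁…a_s} − Σ_i c_i γ^b ∂_{a_i} Ψ_{b U_i}` is gauge-invariant for every
choice of symmetric, gamma-traceless gauge parameter `κ` (i.e. its gauge variation
vanishes identically), then `c₀ = c₁ = … = c_s`, so `ℰ` is proportional to the
spin-(s+1/2) equation of motion.  Fields are realized as spinor-valued polynomial
functions on `D`-dimensional spacetime (`D ≥ 2`), with gamma matrices satisfying
`{γ^a, γ^b} = 2 η^{ab} 1` for a metric of signature `±1`. -/
theorem stmt14 {D s N : ℕ} (hD : 2 ≤ D) (hN : 0 < N)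
    (η : Fin D → ℂ) (hη : ∀ a, η a = 1 ∨ η a = -1)
    (γ : Fin D → Matrix (Fin N) (Fin N) ℂ)
    (hcl : ∀ a b, γ a * γ b + γ b * γ a
      = ((2 : ℂ) * (if a = b then η a else 0)) • (1 : Matrix (Fin N) (Fin N) ℂ))
    (c0 : ℂ) (c : Fin s → ℂ)
    (hinv : ∀ kap : (Fin (s - 1) → Fin D) → Fin N → MvPolynomial (Fin D) ℂ,
      (∀ (w : Fin (s - 1) → Fin D) (σ : Equiv.Perm (Fin (s - 1))), kap (w ∘ σ) = kap w) →
      (∀ (w : Fin (s - 1) → Fin D) (j : Fin (s - 1)),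
        ∑ b, matAct (γ b) (kap (Function.update w j b)) = 0) →
      ∀ v : Fin s → Fin D,
        c0 • (∑ b, matAct (γ b) (pdAct b (gaugeVar kap v)))
          - ∑ i, c i •
              (∑ b, matAct (γ b) (pdAct (v i) (gaugeVar kap (Function.update v i b))))
          = 0) :
    ∀ i, c i = c0 := by
  classical
  intro i₀
  set a0 : Fin D := ⟨0, by omega⟩ with ha0
  set a1 : Fin D := ⟨1, by omega⟩ with ha1
  have hne : a1 ≠ a0 := by simp [ha0, ha1, Fin.ext_iff]
  set τ : ℂ := if η a0 = η a1 then Complex.I else 1 with hτdef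
  have hτ0 : τ ≠ 0 := by
    rw [hτdef]; split_ifs
    · exact Complex.I_ne_zero
    · exact one_ne_zero
  have hττ : η a0 + τ * τ * η a1 = 0 := by
    rw [hτdef]; split_ifs with hcase
    · rw [Complex.I_mul_I, hcase]; ring
    · rcases hη a0 with h0 | h0 <;> rcases hη a1 with h1 | h1 <;>
        first
        | (exact absurd (h0.trans h1.symm) hcase)
        | (rw [h0, h1]; ring)
  have hη0 : η a0 ≠ 0 := by rcases hη a0 with h | h <;> rw [h] <;> norm_num
  have hsq : ∀ a, γ a * γ a = η a • (1 : Matrix (Fin N) (Fin N) ℂ) := by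
    intro a
    have h := hcl a a
    rw [if_pos rfl] at h
    have h2 : (2:ℂ) • (γ a * γ a) = (2:ℂ) • (η a • (1 : Matrix (Fin N) (Fin N) ℂ)) := by
      rw [two_smul, h, mul_smul]
    exact smul_right_injective _ (two_ne_zero) h2
  have hac : γ a0 * γ a1 + γ a1 * γ a0 = 0 := by
    have h := hcl a0 a1
    rw [if_neg hne.symm] at h
    simpa using h
  set M : Matrix (Fin N) (Fin N) ℂ := γ a0 + τ • γ a1 with hM
  have hexp : M * M = (γ a0 * γ a0) + τ • (γ a0 * γ a1 + γ a1 * γ a0)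
      + (τ * τ) • (γ a1 * γ a1) := by
    simp only [hM, mul_add, add_mul, Matrix.smul_mul, Matrix.mul_smul, smul_smul, smul_add]
    abel
  have hM2 : M * M = 0 := by
    rw [hexp, hsq a0, hsq a1, hac, smul_zero, add_zero, smul_smul, ← add_smul, hττ, zero_smul]
  set n0 : Fin N := ⟨0, hN⟩ with hn0
  have hMne : M ≠ 0 := by
    intro h
    have hg : γ a0 = -(τ • γ a1) := by
      have h' : γ a0 + τ • γ a1 = 0 := by rw [← hM, h]
      exact eq_neg_of_add_eq_zero_left h'
    have h1 : (η a0) • (1 : Matrix (Fin N) (Fin N) ℂ) = (τ * τ * η a1) • 1 := by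
      calc (η a0) • (1 : Matrix (Fin N) (Fin N) ℂ) = γ a0 * γ a0 := (hsq a0).symm
        _ = (-(τ • γ a1)) * (-(τ • γ a1)) := by rw [← hg]
        _ = (τ * τ) • (γ a1 * γ a1) := by
            rw [neg_mul_neg, Matrix.smul_mul, Matrix.mul_smul, smul_smul]
        _ = (τ * τ * η a1) • 1 := by rw [hsq a1, smul_smul]
    have h2 : η a0 = τ * τ * η a1 := by
      have := congrArg (fun A => A n0 n0) h1
      simpa [Matrix.smul_apply, Matrix.one_apply_eq] using this
    exact hη0 (by linear_combination hττ/2 + h2/2)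
  have hcol : ∃ n k, M n k ≠ 0 := by
    by_contra hc
    push_neg at hc
    exact hMne (Matrix.ext fun n k => hc n k)
  obtain ⟨nw, kw, hnk⟩ := hcol
  set u : Fin N → ℂ := M.mulVec (Pi.single kw 1) with hu
  have hune : u ≠ 0 := by
    intro h
    apply hnk
    have := congrFun h nw
    simpa [hu, Matrix.mulVec_single] using this
  have hMu : M.mulVec u = 0 := by
    rw [hu, Matrix.mulVec_mulVec, hM2]
    exact Matrix.zero_mulVec _
  -- the gauge parameter
  set t : Fin D → ℂ := fun b => if b = a0 then 1 else if b = a1 then τ else 0 with ht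
  set P : MvPolynomial (Fin D) ℂ := X a0 ^ 2 with hP
  set kap : (Fin (s-1) → Fin D) → Fin N → MvPolynomial (Fin D) ℂ :=
    fun w n => MvPolynomial.C ((∏ j, t (w j)) * u n) * P with hkap
  have hsum : ∑ b : Fin D, t b • γ b = M := by
    have hterm : ∀ b : Fin D, t b • γ b
        = (if b = a0 then γ a0 else 0) + (if b = a1 then τ • γ a1 else 0) := by
      intro b
      by_cases h0 : b = a0
      · subst h0; rw [ht]; simp [hne.symm]
      · by_cases h1 : b = a1
        · subst h1; rw [ht]; simp [h0]
        · rw [ht]; simp [h0, h1]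
    rw [Finset.sum_congr rfl fun b _ => hterm b, Finset.sum_add_distrib,
      Finset.sum_ite_eq' Finset.univ a0, Finset.sum_ite_eq' Finset.univ a1]
    simp [hM]
  have hsumE : ∀ n k, ∑ b : Fin D, t b * γ b n k = M n k := by
    intro n k
    have := congrArg (fun A => A n k) hsum
    simpa [Matrix.sum_apply, Matrix.smul_apply, smul_eq_mul] using this
  have htu : ∀ n, ∑ b : Fin D, t b * (γ b).mulVec u n = 0 := by
    intro n
    have h : ∑ b : Fin D, t b * (γ b).mulVec u n = M.mulVec u n := by
      simp only [Matrix.mulVec, dotProduct, Finset.mul_sum, ← mul_assoc]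
      rw [Finset.sum_comm]
      refine Finset.sum_congr rfl fun k _ => ?_
      rw [← Finset.sum_mul, hsumE n k]
    rw [h, hMu]
    rfl
  have hsym : ∀ (w : Fin (s-1) → Fin D) (σ : Equiv.Perm (Fin (s-1))), kap (w ∘ σ) = kap w := by
    intro w σ
    funext n
    simp only [hkap, Function.comp]
    rw [show (∏ j, t (w (σ j))) = ∏ j, t (w j) from Equiv.prod_comp σ fun j => t (w j)]
  have hmat : ∀ (b : Fin D) (w' : Fin (s-1) → Fin D) (n : Fin N),
      matAct (γ b) (kap w') n
        = MvPolynomial.C ((∏ j, t (w' j)) * ((γ b).mulVec u n)) * P := by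
    intro b w' n
    simp only [matAct, hkap, smul_eq_C_mul, ← mul_assoc, ← map_mul]
    rw [← Finset.sum_mul, ← map_sum]
    congr 2
    simp only [Matrix.mulVec, dotProduct, Finset.mul_sum]
    exact Finset.sum_congr rfl fun k _ => by ring
  have htr : ∀ (w : Fin (s-1) → Fin D) (j : Fin (s-1)),
      ∑ b, matAct (γ b) (kap (Function.update w j b)) = 0 := by
    intro w j
    funext n
    simp only [Finset.sum_apply]
    rw [Finset.sum_congr rfl fun b _ => hmat b _ n]
    rw [← Finset.sum_mul, ← map_sum]
    have hprod : ∀ b : Fin D, (∏ j', t (Function.update w j b j'))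
        = t b * ∏ j' ∈ Finset.univ.erase j, t (w j') := by
      intro b
      rw [← Finset.mul_prod_erase Finset.univ (fun j' => t (Function.update w j b j'))
        (Finset.mem_univ j)]
      congr 1
      · rw [Function.update_self]
      · exact Finset.prod_congr rfl fun x hx =>
          by rw [Function.update_of_ne (Finset.ne_of_mem_erase hx)]
    have hz : (∑ b : Fin D, (∏ j', t (Function.update w j b j')) * ((γ b).mulVec u n)) = 0 := by
      calc (∑ b : Fin D, (∏ j', t (Function.update w j b j')) * ((γ b).mulVec u n))
          = (∏ j' ∈ Finset.univ.erase j, t (w j')) * ∑ b : Fin D, t b * (γ b).mulVec u n := by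
            rw [Finset.mul_sum]
            exact Finset.sum_congr rfl fun b _ => by rw [hprod b]; ring
        _ = 0 := by rw [htu n, mul_zero]
    rw [hz]
    simp
  -- the test point v
  set v : Fin s → Fin D := Function.update (fun _ => a1) i₀ a0 with hv
  have hvi : v i₀ = a0 := by rw [hv, Function.update_self]
  have hvj : ∀ j, j ≠ i₀ → v j = a1 := fun j h => by rw [hv, Function.update_of_ne h]
  have hri : ∀ j : Fin (s-1), removeIdx i₀ v j = a1 := by
    intro j
    unfold removeIdx
    split_ifs with h
    · exact hvj _ (Fin.ne_of_val_ne (by simp; omega))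
    · exact hvj _ (Fin.ne_of_val_ne (by simp; omega))
  have hta1 : t a1 = τ := by rw [ht]; simp [hne]
  have hF : (∏ j : Fin (s-1), t (removeIdx i₀ v j)) = τ ^ (s-1) := by
    rw [Finset.prod_congr rfl fun j _ => by rw [hri j, hta1]]
    rw [Finset.prod_const, Finset.card_univ, Fintype.card_fin]
  have hdP : ∀ b : Fin D, MvPolynomial.pderiv b P = if b = a0 then X a0 + X a0 else 0 :=
    fun b => aux_pderiv_sq a0 b
  have hGgen : ∀ (w' : Fin s → Fin D) (k : Fin N),
      gaugeVar kap w' k = ∑ i, MvPolynomial.C ((∏ j, t (removeIdx i w' j)) * u k)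
        * MvPolynomial.pderiv (w' i) P := by
    intro w' k
    simp only [gaugeVar, Finset.sum_apply, pdAct, hkap, pderiv_C_mul]
  have hkill : ∀ (w' : Fin s → Fin D) (k : Fin N),
      MvPolynomial.pderiv a1 (gaugeVar kap w' k) = 0 := by
    intro w' k
    rw [hGgen, map_sum]
    refine Finset.sum_eq_zero fun i _ => ?_
    rw [pderiv_C_mul, hdP (w' i)]
    split_ifs
    · simp [pderiv_X_of_ne hne.symm]
    · simp
  have hGv : ∀ k, gaugeVar kap v k = MvPolynomial.C (τ^(s-1) * u k) * (X a0 + X a0) := by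
    intro k
    rw [hGgen]
    rw [Finset.sum_eq_single i₀]
    · rw [hvi, hdP a0, if_pos rfl, hF]
    · intro i _ hi
      rw [hvj i hi, hdP a1, if_neg hne, mul_zero]
    · intro h; exact absurd (Finset.mem_univ i₀) h
  have hpd1 : ∀ (b : Fin D) (k : Fin N),
      MvPolynomial.pderiv b (MvPolynomial.C (τ^(s-1) * u k) * (X a0 + X a0))
        = if b = a0 then MvPolynomial.C (τ^(s-1) * u k * 2) else 0 := by
    intro b k
    rw [pderiv_C_mul, map_add]
    by_cases h : b = a0
    · subst h
      rw [if_pos rfl, pderiv_X_self, ← C_1, ← map_add, ← map_mul]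
      norm_num
    · rw [if_neg h, pderiv_X_of_ne (fun hh => h hh.symm), add_zero, mul_zero]
  have hT1 : ∀ n, (∑ b, matAct (γ b) (pdAct b (gaugeVar kap v)) n)
      = MvPolynomial.C (τ^(s-1) * 2 * ((γ a0).mulVec u n)) := by
    intro n
    simp only [matAct, pdAct]
    rw [Finset.sum_congr rfl fun b _ => Finset.sum_congr rfl fun k _ => by
      rw [hGv k, hpd1 b k]]
    rw [Finset.sum_eq_single a0]
    · rw [Finset.sum_congr rfl fun k _ => by rw [if_pos rfl, smul_eq_C_mul, ← map_mul]]
      rw [← map_sum]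
      congr 1
      simp only [Matrix.mulVec, dotProduct, Finset.mul_sum]
      exact Finset.sum_congr rfl fun k _ => by ring
    · intro b _ hb
      exact Finset.sum_eq_zero fun k _ => by rw [if_neg hb, smul_zero]
    · intro h; exact absurd (Finset.mem_univ a0) h
  have hGub : ∀ (b : Fin D) (k : Fin N),
      gaugeVar kap (Function.update v i₀ b) k
        = if b = a0 then MvPolynomial.C (τ^(s-1) * u k) * (X a0 + X a0) else 0 := by
    intro b k
    rw [hGgen]
    rw [Finset.sum_eq_single i₀]
    · rw [Function.update_self, aux_removeIdx_update, hF, hdP b]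
      by_cases h : b = a0 <;> simp [h]
    · intro i _ hi
      rw [Function.update_of_ne hi, hvj i hi, hdP a1, if_neg hne, mul_zero]
    · intro h; exact absurd (Finset.mem_univ i₀) h
  have hT2i : ∀ n, (∑ b, matAct (γ b) (pdAct (v i₀) (gaugeVar kap (Function.update v i₀ b))) n)
      = MvPolynomial.C (τ^(s-1) * 2 * ((γ a0).mulVec u n)) := by
    intro n
    simp only [matAct, pdAct, hvi]
    rw [Finset.sum_congr rfl fun b _ => Finset.sum_congr rfl fun k _ => by rw [hGub b k]]
    rw [Finset.sum_eq_single a0]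
    · rw [Finset.sum_congr rfl fun k _ => by
        rw [if_pos rfl, hpd1 a0 k, if_pos rfl, smul_eq_C_mul, ← map_mul]]
      rw [← map_sum]
      congr 1
      simp only [Matrix.mulVec, dotProduct, Finset.mul_sum]
      exact Finset.sum_congr rfl fun k _ => by ring
    · intro b _ hb
      exact Finset.sum_eq_zero fun k _ => by rw [if_neg hb, map_zero, smul_zero]
    · intro h; exact absurd (Finset.mem_univ a0) h
  have hT2off : ∀ (i : Fin s), i ≠ i₀ → ∀ n,
      (∑ b, matAct (γ b) (pdAct (v i) (gaugeVar kap (Function.update v i b))) n) = 0 := by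
    intro i hi n
    refine Finset.sum_eq_zero fun b _ => ?_
    simp only [matAct, pdAct, hvj i hi]
    refine Finset.sum_eq_zero fun k _ => ?_
    rw [hkill, smul_zero]
  -- nonvanishing of W
  have hW : (γ a0).mulVec u ≠ 0 := by
    intro h
    have h1 : (γ a0).mulVec ((γ a0).mulVec u) = 0 := by rw [h, Matrix.mulVec_zero]
    rw [Matrix.mulVec_mulVec, hsq a0, Matrix.smul_mulVec, Matrix.one_mulVec] at h1
    rcases smul_eq_zero.mp h1 with h2 | h2
    · exact hη0 h2
    · exact hune h2
  obtain ⟨nz, hnz⟩ : ∃ n, (γ a0).mulVec u n ≠ 0 := by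
    by_contra hc; push_neg at hc; exact hW (funext hc)
  -- put it together
  have key := hinv kap hsym htr v
  have keyn := congrFun key nz
  simp only [Pi.sub_apply, Pi.smul_apply, Finset.sum_apply, Pi.zero_apply] at keyn
  rw [hT1 nz] at keyn
  rw [Finset.sum_eq_single i₀ (fun i _ hi => by rw [hT2off i hi nz, smul_zero])
    (fun h => absurd (Finset.mem_univ i₀) h)] at keyn
  rw [hT2i nz] at keyn
  rw [smul_eq_C_mul, smul_eq_C_mul, ← map_mul, ← map_mul, ← map_sub] at keyn
  have h0 : c0 * (τ^(s-1) * 2 * ((γ a0).mulVec u nz))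
      - c i₀ * (τ^(s-1) * 2 * ((γ a0).mulVec u nz)) = 0 :=
    (MvPolynomial.C_injective (Fin D) ℂ) (by rw [keyn, map_zero])
  rw [← sub_mul] at h0
  rcases mul_eq_zero.mp h0 with h | h
  · exact (sub_eq_zero.mp h).symm
  · exact absurd h (mul_ne_zero (mul_ne_zero (pow_ne_zero _ hτ0) two_ne_zero) hnz)
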